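/- Let s ≥ 2 be an integer, let N ∈ ℕ, and let a, b be digit sequences such that: a N ≥ 1 and a n = 0 for all n > N; b n = a n for all n < N, b N = a N − 1, and b n = s − 1 for all n > N (so that ∑_{n=0}^∞ a n / s^{n+1} = ∑_{n=0}^∞ b n / s^{n+1}, i.e. a and b are the two s-adic representations of the same s-adic rational number). Then the corresponding nega-s-adic values are different: ∑_{n=0}^∞ (−1)^{n+1} a n / s^{n+1} ≠ ∑_{n=0}^∞ (−1)^{n+1} b n / s^{n+1}. (Paper's Lemma 1 for the function f₊.) -/

import Mathlib

/-!
Writing `x = -1/s`, the nega-`s`-adic value of a digit sequence `c` is the power series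
`∑ c n * x ^ (n + 1)`. The difference of the two representations has digits `0, …, 0, 1`
followed by a constant tail `-(s - 1)`, so the difference of the values is the explicit
geometric sum `x ^ (N + 1) - (s - 1) x ^ (N + 2) / (1 - x) = x ^ (N + 1) * 2s / (s + 1) ≠ 0`.
-/

theorem summable_natCast_mul_pow_succ {x : ℝ} (hx : |x| < 1) {c : ℕ → ℕ} {B : ℕ}
    (hc : ∀ n, c n ≤ B) : Summable fun n => (c n : ℝ) * x ^ (n + 1) := by
  refine Summable.of_norm_bounded
    ((summable_geometric_of_lt_one (abs_nonneg x) hx).mul_left (B : ℝ)) fun n => ?_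
  rw [norm_mul, norm_pow, Real.norm_natCast, Real.norm_eq_abs, pow_succ, ← mul_assoc]
  calc (c n : ℝ) * |x| ^ n * |x| ≤ c n * |x| ^ n * 1 := by gcongr
    _ ≤ B * |x| ^ n := by rw [mul_one]; gcongr; exact_mod_cast hc n

theorem hasSum_sub_mul_pow_succ_of_two_reps {x : ℝ} (hx : |x| < 1) {N m : ℕ} {a b : ℕ → ℕ}
    (haN : 1 ≤ a N) (haTail : ∀ n > N, a n = 0)
    (hbBefore : ∀ n < N, b n = a n) (hbN : b N = a N - 1) (hbTail : ∀ n > N, b n = m) :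
    HasSum (fun n => ((a n : ℝ) - b n) * x ^ (n + 1))
      (x ^ (N + 1) - m * x ^ (N + 2) / (1 - x)) := by
  rw [← hasSum_nat_add_iff' (N + 1)]
  have head : ∑ i ∈ Finset.range (N + 1), ((a i : ℝ) - b i) * x ^ (i + 1) = x ^ (N + 1) := by
    rw [Finset.sum_range_succ, Finset.sum_eq_zero fun i hi => by
      rw [hbBefore i (Finset.mem_range.mp hi), sub_self, zero_mul], hbN, Nat.cast_sub haN]
    ring
  have tail : ∀ k, ((a (k + (N + 1)) : ℝ) - b (k + (N + 1))) * x ^ (k + (N + 1) + 1)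
      = -(m * x ^ (N + 2)) * x ^ k := fun k => by
    rw [haTail _ (by omega), hbTail _ (by omega)]
    ring
  simp only [tail, head]
  rw [show x ^ (N + 1) - m * x ^ (N + 2) / (1 - x) - x ^ (N + 1)
    = -(m * x ^ (N + 2)) * (1 - x)⁻¹ by ring]
  exact (hasSum_geometric_of_abs_lt_one hx).mul_left _

theorem neg_inv_pow_sub_ne_zero {s : ℝ} (hs : 0 < s) (N : ℕ) :
    (-1 / s) ^ (N + 1) - (s - 1) * (-1 / s) ^ (N + 2) / (1 - -1 / s) ≠ 0 := by
  have key : (-1 / s) ^ (N + 1) - (s - 1) * (-1 / s) ^ (N + 2) / (1 - -1 / s)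
      = (-1 / s) ^ (N + 1) * (2 * s / (s + 1)) := by
    have hs1 : s + 1 ≠ 0 := by positivity
    rw [show (1 : ℝ) - -1 / s = (s + 1) / s by field_simp; ring, pow_succ _ (N + 1)]
    field_simp
    ring
  rw [key]
  exact mul_ne_zero (pow_ne_zero _ (by simp [hs.ne'])) (by positivity)

theorem stmt_1 (s : ℕ) (hs : 2 ≤ s) (N : ℕ) (a b : ℕ → ℕ)
    (ha : ∀ n, a n ≤ s - 1) (hb : ∀ n, b n ≤ s - 1)
    (haN : 1 ≤ a N) (haTail : ∀ n > N, a n = 0)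
    (hbBefore : ∀ n < N, b n = a n) (hbN : b N = a N - 1)
    (hbTail : ∀ n > N, b n = s - 1) :
    (∑' n : ℕ, (-1 : ℝ) ^ (n + 1) * (a n : ℝ) / (s : ℝ) ^ (n + 1)) ≠
      (∑' n : ℕ, (-1 : ℝ) ^ (n + 1) * (b n : ℝ) / (s : ℝ) ^ (n + 1)) := by
  have hs0 : (0 : ℝ) < s := by positivity
  have hx : |(-1 / s : ℝ)| < 1 := by
    rw [abs_div, abs_neg, abs_one, Nat.abs_cast, div_lt_one hs0]
    exact_mod_cast hs
  have nega_eq (c n : ℕ) :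
      (-1 : ℝ) ^ (n + 1) * c / (s : ℝ) ^ (n + 1) = c * (-1 / s : ℝ) ^ (n + 1) := by
    rw [div_pow]
    ring
  simp only [nega_eq]
  intro h
  have hdiff := ((summable_natCast_mul_pow_succ hx ha).hasSum.sub
    (summable_natCast_mul_pow_succ hx hb).hasSum).unique
    (by simpa only [sub_mul] using
      hasSum_sub_mul_pow_succ_of_two_reps hx haN haTail hbBefore hbN hbTail)
  rw [h, sub_self, Nat.cast_sub (by omega), Nat.cast_one] at hdiff
  exact neg_inv_pow_sub_ne_zero hs0 N hdiff.symm
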